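/- arXiv:0906.3643 — 5 statements merged into one kernel-verified Lean document; each statement's English description precedes it below -/
import Mathlib

section
/- Let G be a pseudo-tree: a multigraph whose underlying simple graph is a tree with edges 1,…,m having multiplicities s_1,…,s_m. Then the Banzhaf value of any parallel edge i_1 corresponding to underlying edge i equals ∏_{j≠i} (2^{s_j} − 1). -/
open Finset
open scoped Classical

/-- The Banzhaf value of player `p` in the simple game with winning predicate `win`:
the number of coalitions in which `p` is critical. -/
noncomputable def banzhafVal {E : Type*} [Fintype E] [DecidableEq E]
    (win : Finset E → Prop) (p : E) : ℕ :=
  (Finset.univ.filter (fun S : Finset E => p ∈ S ∧ win S ∧ ¬ win (S.erase p))).card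

/-- The Banzhaf index of player `p`: its Banzhaf value divided by the sum of all
Banzhaf values. -/
noncomputable def banzhafIdx {E : Type*} [Fintype E] [DecidableEq E]
    (win : Finset E → Prop) (p : E) : ℚ :=
  (banzhafVal win p : ℚ) / ∑ q : E, (banzhafVal win q : ℚ)

/-- The Shapley-Shubik value of player `p`:
`κ_p = Σ_{S ∋ p, win S, ¬ win (S \ {p})} (|S|-1)! (n-|S|)!`. -/
noncomputable def shapVal {E : Type*} [Fintype E] [DecidableEq E]
    (win : Finset E → Prop) (p : E) : ℕ :=
  ∑ S ∈ Finset.univ.filter (fun S : Finset E => p ∈ S ∧ win S ∧ ¬ win (S.erase p)),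
    (S.card - 1).factorial * (Fintype.card E - S.card).factorial

/-- In the spanning connectivity game of a pseudo-tree with underlying tree edges `1,…,m`
of multiplicities `s 1, …, s m`, a coalition of parallel edges is winning iff it contains
at least one parallel copy of each underlying edge. -/
def PseudoTreeWin {m : ℕ} {s : Fin m → ℕ} (C : Finset (Σ j : Fin m, Fin (s j))) : Prop :=
  ∀ j : Fin m, ∃ k : Fin (s j), (⟨j, k⟩ : Σ j : Fin m, Fin (s j)) ∈ C

/-! A coalition is critical for the copy `⟨i, b⟩` exactly when its fibre over `i` is `{b}` and
all its other fibres are nonempty. Reading a coalition as the family of its fibres, the critical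
coalitions are therefore the families with `{b}` over `i` and an arbitrary nonempty subset of the
`s j` copies over each `j ≠ i`, and there are `2 ^ s j - 1` such subsets. -/

namespace Finset

variable {ι : Type*} {β : ι → Type*} [Fintype ι]

noncomputable def sigmaFibersEquiv : Finset (Σ j, β j) ≃ ∀ j, Finset (β j) where
  toFun S j := S.preimage (Sigma.mk j) sigma_mk_injective.injOn
  invFun f := univ.sigma f
  left_inv S := by ext ⟨j, b⟩; simp
  right_inv f := by ext j b; simp

@[simp]
theorem mem_sigmaFibersEquiv {S : Finset (Σ j, β j)} {j : ι} {b : β j} :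
    b ∈ sigmaFibersEquiv S j ↔ ⟨j, b⟩ ∈ S := by
  simp [sigmaFibersEquiv]

theorem sigmaFibersEquiv_erase [DecidableEq ι] [∀ j, DecidableEq (β j)]
    [DecidableEq (Σ j, β j)] (S : Finset (Σ j, β j)) (i : ι) (b : β i) :
    sigmaFibersEquiv (S.erase ⟨i, b⟩)
      = Function.update (sigmaFibersEquiv S) i ((sigmaFibersEquiv S i).erase b) := by
  ext j c
  by_cases hj : j = i
  · subst hj; simp
  · simp [hj]

end Finset

theorem card_filter_nonempty_finset (α : Type*) [Fintype α] :
    #(univ.filter fun T : Finset α => T.Nonempty) = 2 ^ Fintype.card α - 1 := by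
  have : univ.filter (fun T : Finset α => T.Nonempty) = univ.erase ∅ := by
    ext T; simp [nonempty_iff_ne_empty]
  rw [this, card_erase_of_mem (mem_univ _), card_univ, Fintype.card_finset]

section CoversAllFibers

variable {ι : Type*} {β : ι → Type*} [Fintype ι]

theorem card_filter_eq_singleton_and_nonempty [DecidableEq ι] [∀ j, Fintype (β j)]
    (i : ι) (b : β i) :
    #(univ.filter fun f : ∀ j, Finset (β j) => f i = {b} ∧ ∀ j ≠ i, (f j).Nonempty)
      = ∏ j ∈ univ.erase i, (2 ^ Fintype.card (β j) - 1) := by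
  let t : ∀ j, Finset (Finset (β j)) :=
    Function.update (fun j => univ.filter fun T => T.Nonempty) i {{b}}
  have ht : univ.filter (fun f : ∀ j, Finset (β j) => f i = {b} ∧ ∀ j ≠ i, (f j).Nonempty)
      = Fintype.piFinset t := by
    ext f
    simp only [mem_filter, mem_univ, true_and, Fintype.mem_piFinset]
    constructor
    · rintro ⟨hi, hne⟩ j
      by_cases hj : j = i
      · subst hj; simp [t, hi]
      · simpa [t, Function.update_of_ne hj] using hne j hj
    · intro h
      exact ⟨by simpa [t] using h i, fun j hj => by simpa [t, Function.update_of_ne hj] using h j⟩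
  rw [ht, Fintype.card_piFinset, ← mul_prod_erase _ _ (mem_univ i)]
  simp only [t, Function.update_self, card_singleton, one_mul]
  refine prod_congr rfl fun j hj => ?_
  rw [Function.update_of_ne (ne_of_mem_erase hj), card_filter_nonempty_finset]

def CoversAllFibers (C : Finset (Σ j, β j)) : Prop := ∀ j, ∃ b, ⟨j, b⟩ ∈ C

theorem coversAllFibers_iff {C : Finset (Σ j, β j)} :
    CoversAllFibers C ↔ ∀ j, (sigmaFibersEquiv C j).Nonempty := by
  simp [CoversAllFibers, Finset.Nonempty]

theorem isCritical_coversAllFibers_iff [DecidableEq ι] [∀ j, DecidableEq (β j)]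
    [DecidableEq (Σ j, β j)] {C : Finset (Σ j, β j)} {i : ι} {b : β i} :
    (⟨i, b⟩ ∈ C ∧ CoversAllFibers C ∧ ¬ CoversAllFibers (C.erase ⟨i, b⟩)) ↔
      sigmaFibersEquiv C i = {b} ∧ ∀ j ≠ i, (sigmaFibersEquiv C j).Nonempty := by
  simp only [coversAllFibers_iff, sigmaFibersEquiv_erase, ← mem_sigmaFibersEquiv]
  constructor
  · rintro ⟨-, hcov, hlose⟩
    obtain ⟨j, hj⟩ := not_forall.mp hlose
    by_cases hji : j = i
    · subst hji
      rw [Function.update_self, not_nonempty_iff_eq_empty, erase_eq_empty_iff] at hj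
      exact ⟨hj.resolve_left (hcov j).ne_empty, fun j _ => hcov j⟩
    · rw [Function.update_of_ne hji] at hj
      exact absurd (hcov j) hj
  · rintro ⟨hi, hne⟩
    have hcov : ∀ j, (sigmaFibersEquiv C j).Nonempty := fun j => by
      by_cases hji : j = i
      · subst hji; simp [hi]
      · exact hne j hji
    refine ⟨by simp [hi], hcov, fun h => ?_⟩
    simpa [hi] using h i

theorem banzhafVal_coversAllFibers [DecidableEq ι] [∀ j, Fintype (β j)] [∀ j, DecidableEq (β j)]
    [DecidableEq (Σ j, β j)] (i : ι) (b : β i) :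
    banzhafVal CoversAllFibers (⟨i, b⟩ : Σ j, β j)
      = ∏ j ∈ univ.erase i, (2 ^ Fintype.card (β j) - 1) := by
  rw [banzhafVal, ← card_filter_eq_singleton_and_nonempty i b]
  refine card_equiv sigmaFibersEquiv fun C => ?_
  simp only [mem_filter, mem_univ, true_and, isCritical_coversAllFibers_iff]

end CoversAllFibers

theorem stmt_2_general (m : ℕ) (s : Fin m → ℕ) (i : Fin m) (k : Fin (s i)) :
    banzhafVal (PseudoTreeWin (s := s)) ⟨i, k⟩
      = ∏ j ∈ Finset.univ.erase i, (2 ^ s j - 1) := by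
  rw [show PseudoTreeWin (s := s) = CoversAllFibers from rfl, banzhafVal_coversAllFibers]
  simp only [Fintype.card_fin]

/-- In a pseudo-tree, the Banzhaf value of any parallel copy of underlying edge `i`
equals `∏_{j ≠ i} (2^{s_j} - 1)`. -/
theorem stmt_2 (m : ℕ) (s : Fin m → ℕ) (hs : ∀ j, 1 ≤ s j) (i : Fin m) (k : Fin (s i)) :
    banzhafVal (PseudoTreeWin (s := s)) ⟨i, k⟩
      = ∏ j ∈ Finset.univ.erase i, (2 ^ s j - 1) :=
  stmt_2_general m s i k
end

section
/- In a pseudo-tree with underlying tree edges 1,…,m of multiplicities s_1,…,s_m, the Banzhaf index of a parallel edge of underlying edge i equals ∏_{j≠i}(2^{s_j}−1) / Σ_{k=1}^m s_k ∏_{j≠k}(2^{s_j}−1). -/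
/-!
A coalition of parallel edges is the same as a choice of one subset of copies for every
underlying edge (its fibres). Copy `a` of edge `i` is critical in a winning coalition exactly when
the fibre over `i` is `{a}` while every other fibre is nonempty, so its Banzhaf value is
`∏_{j ≠ i} (2^{s_j} - 1)`, independent of `a`; summing over the `s_k` copies of each edge `k`
gives the normalising sum.
-/

open Finset
open scoped Classical

namespace Finset

variable {ι : Type*} {α : ι → Type*}

noncomputable def sigmaFibre (S : Finset (Σ j, α j)) (j : ι) : Finset (α j) :=
  S.preimage (Sigma.mk j) sigma_mk_injective.injOn

@[simp]
lemma mem_sigmaFibre {S : Finset (Σ j, α j)} {j : ι} {a : α j} :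
    a ∈ S.sigmaFibre j ↔ ⟨j, a⟩ ∈ S :=
  mem_preimage

noncomputable def sigmaFibreEquiv [Fintype ι] : Finset (Σ j, α j) ≃ ∀ j, Finset (α j) where
  toFun := sigmaFibre
  invFun t := univ.sigma t
  left_inv S := sigma_preimage_mk_of_subset S (subset_univ _)
  right_inv t := by ext; simp

lemma card_filter_sigmaFibre_mem [Fintype ι] [DecidableEq ι] [∀ j, Fintype (α j)]
    [∀ j, DecidableEq (α j)] (t : ∀ j, Finset (Finset (α j))) :
    #{S : Finset (Σ j, α j) | ∀ j, S.sigmaFibre j ∈ t j} = ∏ j, #(t j) := by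
  rw [← Fintype.card_piFinset]
  refine card_equiv sigmaFibreEquiv fun S => ?_
  simp only [mem_filter, mem_univ, true_and, Fintype.mem_piFinset]
  rfl

end Finset

lemma card_filter_nonempty (β : Type*) [Fintype β] :
    #{A : Finset β | A.Nonempty} = 2 ^ Fintype.card β - 1 := by
  rw [filter_congr fun A _ => nonempty_iff_ne_empty, filter_ne' univ,
    card_erase_of_mem (mem_univ _), card_univ, Fintype.card_finset]

section MeetsEveryFibre

variable {ι : Type*} {α : ι → Type*}

def MeetsEveryFibre (S : Finset (Σ j, α j)) : Prop :=
  ∀ j, ∃ a, ⟨j, a⟩ ∈ S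

lemma meetsEveryFibre_iff {S : Finset (Σ j, α j)} :
    MeetsEveryFibre S ↔ ∀ j, (S.sigmaFibre j).Nonempty := by
  simp [MeetsEveryFibre, Finset.Nonempty]

variable [DecidableEq ι] [∀ j, DecidableEq (α j)]

lemma sigmaFibre_erase_self (S : Finset (Σ j, α j)) (i : ι) (a : α i) :
    (S.erase ⟨i, a⟩).sigmaFibre i = (S.sigmaFibre i).erase a := by
  ext b; simp

lemma sigmaFibre_erase_of_ne (S : Finset (Σ j, α j)) {i j : ι} (a : α i) (h : j ≠ i) :
    (S.erase ⟨i, a⟩).sigmaFibre j = S.sigmaFibre j := by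
  ext b; simp [h]

lemma critical_meetsEveryFibre_iff {S : Finset (Σ j, α j)} {i : ι} {a : α i} :
    (⟨i, a⟩ ∈ S ∧ MeetsEveryFibre S ∧ ¬ MeetsEveryFibre (S.erase ⟨i, a⟩)) ↔
      S.sigmaFibre i = {a} ∧ ∀ j ≠ i, (S.sigmaFibre j).Nonempty := by
  have h_erase : MeetsEveryFibre (S.erase ⟨i, a⟩) ↔
      ((S.sigmaFibre i).erase a).Nonempty ∧ ∀ j ≠ i, (S.sigmaFibre j).Nonempty := by
    rw [meetsEveryFibre_iff, ← and_forall_ne i, sigmaFibre_erase_self]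
    exact and_congr_right' <| forall₂_congr fun j hj => by rw [sigmaFibre_erase_of_ne _ _ hj]
  rw [h_erase, meetsEveryFibre_iff, ← and_forall_ne i, ← mem_sigmaFibre,
    not_and', not_nonempty_iff_eq_empty, erase_eq_empty_iff]
  constructor
  · rintro ⟨ha, ⟨-, hne⟩, h⟩
    exact ⟨(h hne).resolve_left (ne_empty_of_mem ha), hne⟩
  · rintro ⟨hi, hne⟩
    exact ⟨hi ▸ mem_singleton_self a, ⟨hi ▸ singleton_nonempty a, hne⟩,
      fun _ => .inr hi⟩

end MeetsEveryFibre

section BanzhafMeetsEveryFibre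

variable {ι : Type*} [Fintype ι] [DecidableEq ι] {α : ι → Type*}
  [∀ j, Fintype (α j)] [∀ j, DecidableEq (α j)]

lemma banzhafVal_meetsEveryFibre (i : ι) (a : α i) :
    banzhafVal MeetsEveryFibre (⟨i, a⟩ : Σ j, α j) =
      ∏ j ∈ univ.erase i, (2 ^ Fintype.card (α j) - 1) := by
  let t : ∀ j, Finset (Finset (α j)) :=
    Function.update (fun j => univ.filter fun A : Finset (α j) => A.Nonempty) i {{a}}
  calc banzhafVal MeetsEveryFibre (⟨i, a⟩ : Σ j, α j)
      = #{S : Finset (Σ j, α j) | ∀ j, S.sigmaFibre j ∈ t j} := by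
        rw [banzhafVal]
        congr 1
        refine filter_congr fun S _ => ?_
        rw [critical_meetsEveryFibre_iff,
          Function.forall_update_iff (p := fun j T => S.sigmaFibre j ∈ T)]
        simp only [mem_singleton, mem_filter, mem_univ, true_and]
    _ = ∏ j, #(t j) := card_filter_sigmaFibre_mem t
    _ = ∏ j ∈ univ.erase i, (2 ^ Fintype.card (α j) - 1) := by
        rw [← mul_prod_erase univ _ (mem_univ i)]
        dsimp only [t]
        rw [Function.update_self, card_singleton, one_mul]
        refine prod_congr rfl fun j hj => ?_
        rw [Function.update_of_ne (ne_of_mem_erase hj), card_filter_nonempty]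

lemma banzhafIdx_meetsEveryFibre (i : ι) (a : α i) :
    banzhafIdx MeetsEveryFibre (⟨i, a⟩ : Σ j, α j) =
      (∏ j ∈ univ.erase i, ((2 : ℚ) ^ Fintype.card (α j) - 1)) /
        ∑ l, (Fintype.card (α l) : ℚ) *
          ∏ j ∈ univ.erase l, ((2 : ℚ) ^ Fintype.card (α j) - 1) := by
  have h_val (l : ι) (b : α l) : (banzhafVal MeetsEveryFibre (⟨l, b⟩ : Σ j, α j) : ℚ) =
      ∏ j ∈ univ.erase l, ((2 : ℚ) ^ Fintype.card (α j) - 1) := by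
    rw [banzhafVal_meetsEveryFibre, Nat.cast_prod]
    exact prod_congr rfl fun j _ => by
      rw [Nat.cast_sub Nat.one_le_two_pow, Nat.cast_pow, Nat.cast_ofNat, Nat.cast_one]
  simp only [banzhafIdx, Fintype.sum_sigma, h_val, sum_const, card_univ, nsmul_eq_mul]

end BanzhafMeetsEveryFibre

theorem stmt_3_general (m : ℕ) (s : Fin m → ℕ) (i : Fin m) (k : Fin (s i)) :
    banzhafIdx (PseudoTreeWin (s := s)) ⟨i, k⟩
      = (∏ j ∈ Finset.univ.erase i, ((2 : ℚ) ^ s j - 1))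
        / ∑ k' : Fin m, (s k' : ℚ) * ∏ j ∈ Finset.univ.erase k', ((2 : ℚ) ^ s j - 1) := by
  -- `PseudoTreeWin` is `MeetsEveryFibre` for the fibres `Fin (s j)`, by unfolding.
  have h := banzhafIdx_meetsEveryFibre (α := fun j => Fin (s j)) i k
  simp only [Fintype.card_fin] at h
  exact h

/-- In a pseudo-tree, the Banzhaf index of any parallel copy of underlying edge `i` equals
`∏_{j≠i}(2^{s_j}−1) / Σ_{k=1}^m s_k ∏_{j≠k}(2^{s_j}−1)`. -/
theorem stmt_3 (m : ℕ) (s : Fin m → ℕ) (hs : ∀ j, 1 ≤ s j) (i : Fin m) (k : Fin (s i)) :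
    banzhafIdx (PseudoTreeWin (s := s)) ⟨i, k⟩
      = (∏ j ∈ Finset.univ.erase i, ((2 : ℚ) ^ s j - 1))
        / ∑ k' : Fin m, (s k' : ℚ) * ∏ j ∈ Finset.univ.erase k', ((2 : ℚ) ^ s j - 1) :=
  stmt_3_general m s i k
end

section
/- The (m+1)×(m+1) matrix A with entries A_{ij} = (i+j−2)! (for 1 ≤ i,j ≤ m+1) has determinant (1!·2!⋯m!)^2; in particular A is invertible over the rationals. -/
/-!
Writing `(i + j)! = i! j! · C(i + j, j)` and expanding `C(i + j, j) = ∑ₖ C(i, k) C(j, k)` by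
Vandermonde's identity factors the Hankel matrix as `L Lᵀ` with `L i k = i! C(i, k)`.
The factor `L` is lower triangular with diagonal `0!, 1!, …, m!`.
-/

open Finset Matrix Nat

theorem Nat.sum_range_choose_mul_choose {n j : ℕ} (i : ℕ) (hj : j < n) :
    ∑ k ∈ range n, i.choose k * j.choose k = (i + j).choose j := by
  rw [Nat.add_choose_eq, Nat.sum_antidiagonal_eq_sum_range_succ_mk]
  refine (sum_subset (range_subset_range.mpr hj) fun k _ hk => ?_).symm.trans ?_
  · rw [Nat.choose_eq_zero_of_lt (n := j) (by simpa using hk), mul_zero]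
  · refine sum_congr rfl fun k hk => ?_
    rw [Nat.choose_symm (Nat.lt_succ_iff.mp (mem_range.mp hk))]

theorem Nat.factorial_add_eq_sum_range {n j : ℕ} (i : ℕ) (hj : j < n) :
    (i + j)! = ∑ k ∈ range n, (i ! * i.choose k) * (j ! * j.choose k) := by
  calc (i + j)! = i ! * j ! * ∑ k ∈ range n, i.choose k * j.choose k := by
        rw [Nat.sum_range_choose_mul_choose i hj, ← Nat.add_choose_mul_factorial_mul_factorial]
        ring
    _ = _ := by
        rw [mul_sum]
        exact sum_congr rfl fun _ _ => by ring

namespace Matrix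

variable (R : Type*) [CommRing R] (n : ℕ)

def factorialHankel : Matrix (Fin n) (Fin n) R :=
  of fun i j => ((i.val + j.val)! : R)

def factorialChoose : Matrix (Fin n) (Fin n) R :=
  of fun i k => ((i.val ! * i.val.choose k.val : ℕ) : R)

theorem factorialHankel_eq_mul_transpose :
    factorialHankel R n = factorialChoose R n * (factorialChoose R n)ᵀ := by
  ext i j
  simp only [factorialHankel, factorialChoose, mul_apply, transpose_apply, of_apply]
  rw [Fin.sum_univ_eq_sum_range (fun k => ((i.val ! * i.val.choose k : ℕ) : R) *
    ((j.val ! * j.val.choose k : ℕ) : R)), Nat.factorial_add_eq_sum_range i.val j.isLt]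
  push_cast
  rfl

theorem factorialChoose_isLowerTriangular : (factorialChoose R n).IsLowerTriangular :=
  fun i k hik => by
    simp [factorialChoose, Nat.choose_eq_zero_of_lt (show i.val < k.val from hik)]

theorem det_factorialChoose : (factorialChoose R n).det = ∏ k ∈ range n, (k ! : R) := by
  rw [det_of_isLowerTriangular _ (factorialChoose_isLowerTriangular R n),
    ← Fin.prod_univ_eq_prod_range]
  simp [factorialChoose]

theorem det_factorialHankel : (factorialHankel R n).det = (∏ k ∈ range n, (k ! : R)) ^ 2 := by
  rw [factorialHankel_eq_mul_transpose, det_mul, det_transpose, det_factorialChoose, sq]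

theorem isUnit_factorialHankel (K : Type*) [Field K] [CharZero K] :
    IsUnit (factorialHankel K n) := by
  rw [isUnit_iff_isUnit_det, det_factorialHankel]
  exact (prod_ne_zero_iff.mpr fun k _ => mod_cast k.factorial_ne_zero).isUnit.pow 2

end Matrix

/-- The (m+1)×(m+1) Hankel matrix `A` with `A_{ij} = (i+j-2)!` (indices `1 ≤ i,j ≤ m+1`,
i.e. `(i+j)!` with 0-based indices) has determinant `(1!·2!⋯m!)^2`; in particular it is
invertible over the rationals. -/
theorem stmt_6 (m : ℕ) :
    (Matrix.of (fun i j : Fin (m + 1) => ((i.val + j.val).factorial : ℚ))).det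
        = (∏ k ∈ Finset.range (m + 1), (k.factorial : ℚ)) ^ 2 ∧
      IsUnit (Matrix.of (fun i j : Fin (m + 1) => ((i.val + j.val).factorial : ℚ))) :=
  ⟨det_factorialHankel ℚ (m + 1), isUnit_factorialHankel (m + 1) ℚ⟩
end

section
/- Let G = (V,E) be a connected graph, and let G_i be obtained from G by attaching to a fixed vertex v ∈ V a path of i+1 new edges (i ≥ 0), with x the edge of the path incident to v. Let N_r be the number of connected spanning subgraphs of G with r edges and m = |E|. Then the Shapley-Shubik value of x in the spanning connectivity game on G_i satisfies κ_x(G_i) = Σ_{r=0}^{m} (r+i)! · N_r · (m−r)!. -/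
/-!
Every edge of the attached path is a bridge of `G_i`, so a coalition of `G_i` wins exactly when
it contains the whole path and its edges in `E` form a connected spanning subgraph `T` of `G`.
In particular `x` is critical in every winning coalition, and the winning coalition `T ∪ path`
has `|T| + i + 1` players, so it contributes `(|T| + i)! (m - |T|)!`. Grouping the connected
spanning subgraphs `T` by `|T| = r` gives the formula.
-/

open Finset
open scoped Classical

/-- Reachability between vertices using only edges in the coalition `S`. -/
def Connects {V E : Type*} (ends : E → V × V) (S : Finset E) (a b : V) : Prop :=
  Relation.ReflTransGen (fun u w => ∃ e ∈ S, ends e = (u, w) ∨ ends e = (w, u)) a b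

/-- `(V, S)` is a connected spanning subgraph of the multigraph with edge-endpoint map `ends`. -/
def IsCSS {V E : Type*} (ends : E → V × V) (S : Finset E) : Prop :=
  ∀ a b : V, Connects ends S a b

/-- The Shapley-Shubik index of player `p`: `φ_p = κ_p / n!`. -/
noncomputable def shapIdx {E : Type*} [Fintype E] [DecidableEq E]
    (win : Finset E → Prop) (p : E) : ℚ :=
  (shapVal win p : ℚ) / (Fintype.card E).factorial

/-- Attaching to the vertex `v` of `G` a path of `i+1` new edges, with new path vertices
`Fin (i+1)`; the new edge `Sum.inr 0` (the edge `x`) is incident to `v`, and for `k ≠ 0` the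
new edge `Sum.inr k` joins path vertex `k-1` to path vertex `k`. -/
def pathExt {V E : Type*} (ends : E → V × V) (v : V) (i : ℕ) :
    E ⊕ Fin (i + 1) → (V ⊕ Fin (i + 1)) × (V ⊕ Fin (i + 1))
  | Sum.inl e => (Sum.inl (ends e).1, Sum.inl (ends e).2)
  | Sum.inr k =>
      (if k.val = 0 then Sum.inl v
        else Sum.inr ⟨k.val - 1, Nat.lt_of_le_of_lt (Nat.sub_le _ _) k.isLt⟩, Sum.inr k)

namespace Connects

variable {V W E E' : Type*} {ends : E → V × V} {S : Finset E} {a b : V}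

lemma symm (h : Connects ends S a b) : Connects ends S b a :=
  Relation.ReflTransGen.mono (fun _ _ ⟨e, he, h⟩ => ⟨e, he, h.symm⟩) _ _
    (Relation.ReflTransGen.swap _ _ h)

lemma of_mem {e : E} (he : e ∈ S) : Connects ends S (ends e).1 (ends e).2 :=
  Relation.ReflTransGen.single ⟨e, he, Or.inl rfl⟩

lemma map {ends' : E' → W × W} {S' : Finset E'} (f : V → W)
    (hf : ∀ e ∈ S, f (ends e).1 = f (ends e).2 ∨
      ∃ e' ∈ S', ends' e' = Prod.map f f (ends e))
    (h : Connects ends S a b) : Connects ends' S' (f a) (f b) := by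
  refine Relation.ReflTransGen.lift' f ?_ _ _ h
  rintro u w ⟨e, he, huw⟩
  have hst : Connects ends' S' (f (ends e).1) (f (ends e).2) := by
    obtain hloop | ⟨e', he', hends⟩ := hf e he
    · exact hloop ▸ Relation.ReflTransGen.refl
    · simpa [hends] using of_mem (ends := ends') he'
  rcases huw with huw | huw <;> rw [huw] at hst
  exacts [hst, hst.symm]

lemma apply_eq {α : Type*} (f : V → α) (hf : ∀ e ∈ S, f (ends e).1 = f (ends e).2)
    (h : Connects ends S a b) : f a = f b := by
  induction h with
  | refl => rfl
  | tail _ hstep ih =>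
    obtain ⟨e, he, huw | huw⟩ := hstep <;> have := hf e he <;> simp_all

end Connects

section PathExt

variable {V E : Type*} {ends : E → V × V} {v : V} {i : ℕ} {S : Finset (E ⊕ Fin (i + 1))}

lemma connects_pathExt_inr_inl (hS : ∀ k, Sum.inr k ∈ S) (k : Fin (i + 1)) :
    Connects (pathExt ends v i) S (Sum.inr k) (Sum.inl v) := by
  obtain ⟨n, hn⟩ := k
  induction n with
  | zero =>
    have hstep := (Connects.of_mem (ends := pathExt ends v i) (hS ⟨0, hn⟩)).symm
    simp only [pathExt, if_true] at hstep
    exact hstep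
  | succ n ih =>
    have hstep := (Connects.of_mem (ends := pathExt ends v i) (hS ⟨n + 1, hn⟩)).symm
    simp only [pathExt, Nat.add_one_ne_zero, if_false, Nat.add_sub_cancel] at hstep
    exact hstep.trans (ih _)

/-- Every path edge is a bridge: without edge `k`, the path vertices `j ≥ k` are cut off. -/
lemma mem_of_isCSS_pathExt (h : IsCSS (pathExt ends v i) S) (k : Fin (i + 1)) :
    Sum.inr k ∈ S := by
  by_contra hk
  let beyond : V ⊕ Fin (i + 1) → Prop := Sum.elim (fun _ => False) fun j => k ≤ j
  have hcut : ∀ e ∈ S, beyond (pathExt ends v i e).1 = beyond (pathExt ends v i e).2 := by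
    rintro (e | j) he
    · rfl
    · have hjk : j ≠ k := by rintro rfl; exact hk he
      simp only [pathExt, beyond]
      rw [← Fin.val_ne_iff] at hjk
      split_ifs <;> simp only [Sum.elim_inl, Sum.elim_inr, Fin.le_def, eq_iff_iff,
        false_iff, not_le] <;> omega
  simpa [beyond] using Connects.apply_eq beyond hcut (h (Sum.inr k) (Sum.inl v))

lemma isCSS_toLeft_of_isCSS_pathExt (h : IsCSS (pathExt ends v i) S) :
    IsCSS ends S.toLeft := by
  intro a b
  refine Connects.map (Sum.elim id fun _ => v) ?_ (h (Sum.inl a) (Sum.inl b))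
  rintro (e | j) he
  · exact Or.inr ⟨e, by simpa using he, by simp [pathExt]⟩
  · left
    simp only [pathExt]
    split_ifs <;> rfl

lemma isCSS_pathExt_of_isCSS_toLeft (hS : ∀ k, Sum.inr k ∈ S) (h : IsCSS ends S.toLeft) :
    IsCSS (pathExt ends v i) S := by
  have hv : ∀ s, Connects (pathExt ends v i) S s (Sum.inl v) := by
    rintro (a | k)
    · refine Connects.map Sum.inl (fun e he => Or.inr ⟨Sum.inl e, ?_, ?_⟩) (h a v)
      exacts [Finset.mem_toLeft.mp he, rfl]
    · exact connects_pathExt_inr_inl hS k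
  exact fun a b => (hv a).trans (hv b).symm

theorem isCSS_pathExt_iff :
    IsCSS (pathExt ends v i) S ↔ (∀ k, Sum.inr k ∈ S) ∧ IsCSS ends S.toLeft :=
  ⟨fun h => ⟨mem_of_isCSS_pathExt h, isCSS_toLeft_of_isCSS_pathExt h⟩,
    fun h => isCSS_pathExt_of_isCSS_toLeft h.1 h.2⟩

end PathExt

section ShapleyShubik

variable {E F : Type*} [Fintype E] [DecidableEq E]

theorem shapVal_eq_sum_of_forall_mem {win : Finset E → Prop} {p : E}
    (hp : ∀ S, win S → p ∈ S) :
    shapVal win p = ∑ S ∈ univ.filter win,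
      (S.card - 1).factorial * (Fintype.card E - S.card).factorial := by
  refine sum_congr (filter_congr fun S _ => ?_) fun _ _ => rfl
  exact ⟨fun h => h.2.1, fun h => ⟨hp S h, h, fun h' => S.notMem_erase p (hp _ h')⟩⟩

theorem shapVal_inr_of_win_iff [Fintype F] [DecidableEq F]
    {win : Finset (E ⊕ F) → Prop} {win' : Finset E → Prop}
    (hwin : ∀ S, win S ↔ (∀ k, Sum.inr k ∈ S) ∧ win' S.toLeft) (k : F) :
    shapVal win (Sum.inr k) = ∑ T ∈ univ.filter win',
      (T.card + (Fintype.card F - 1)).factorial * (Fintype.card E - T.card).factorial := by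
  have htoRight : ∀ S, win S → S.toRight = univ := fun S hS =>
    eq_univ_of_forall fun k => mem_toRight.mpr (((hwin S).mp hS).1 k)
  rw [shapVal_eq_sum_of_forall_mem fun S hS => ((hwin S).mp hS).1 k]
  refine Finset.sum_nbij' toLeft (fun T => T.disjSum univ) ?_ ?_ ?_ ?_ ?_
  · intro S hS
    simp only [mem_filter, mem_univ, true_and] at hS ⊢
    exact ((hwin S).mp hS).2
  · intro T hT
    simp only [mem_filter, mem_univ, true_and] at hT ⊢
    simpa [hwin] using hT
  · intro S hS
    rw [← htoRight S (mem_filter.mp hS).2]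
    exact toLeft_disjSum_toRight
  · intro T _
    exact toLeft_disjSum
  · intro S hS
    simp only [mem_filter, mem_univ, true_and] at hS
    have hcard : S.card = S.toLeft.card + Fintype.card F := by
      rw [← card_toLeft_add_card_toRight, htoRight S hS, card_univ]
    have hpos : 0 < Fintype.card F := Fintype.card_pos_iff.mpr ⟨k⟩
    rw [hcard, Fintype.card_sum, Nat.add_sub_add_right, Nat.add_sub_assoc hpos]

end ShapleyShubik

theorem Finset.sum_filter_apply_card {E M : Type*} [Fintype E] [AddCommMonoid M]
    (P : Finset E → Prop) (g : ℕ → M) :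
    ∑ T ∈ univ.filter P, g T.card = ∑ r ∈ range (Fintype.card E + 1),
      (univ.filter fun T : Finset E => P T ∧ T.card = r).card • g r := by
  rw [← Finset.sum_fiberwise_of_maps_to (g := Finset.card) (t := range (Fintype.card E + 1))
    fun T _ => mem_range.mpr (Nat.lt_succ_of_le (card_le_univ T))]
  refine sum_congr rfl fun r _ => ?_
  rw [sum_congr rfl fun T hT => congrArg g (mem_filter.mp hT).2, sum_const, filter_filter]

theorem stmt_10_general {V E : Type*} [Fintype E] [DecidableEq E]
    (ends : E → V × V) (v : V) (i : ℕ) :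
    shapVal (IsCSS (pathExt ends v i)) (Sum.inr (0 : Fin (i + 1)))
      = ∑ r ∈ Finset.range (Fintype.card E + 1),
          (r + i).factorial
            * (Finset.univ.filter
                (fun S : Finset E => IsCSS ends S ∧ S.card = r)).card
            * (Fintype.card E - r).factorial := by
  rw [shapVal_inr_of_win_iff (fun _ => isCSS_pathExt_iff) 0, Fintype.card_fin,
    Nat.add_sub_cancel,
    sum_filter_apply_card (IsCSS ends) fun r => (r + i).factorial * (Fintype.card E - r).factorial]
  simp only [smul_eq_mul, mul_assoc, mul_left_comm]

/-- Let `G_i` be obtained from a connected graph `G` by attaching to `v` a path of `i+1` new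
edges, with `x` the path edge incident to `v`. Writing `N_r` for the number of connected
spanning subgraphs of `G` with `r` edges and `m = |E|`, the Shapley-Shubik value of `x` in
the spanning connectivity game on `G_i` is `κ_x(G_i) = Σ_{r=0}^{m} (r+i)! · N_r · (m−r)!`. -/
theorem stmt_10 {V E : Type*} [Fintype V] [Fintype E] [DecidableEq E]
    (ends : E → V × V) (v : V) (hconn : IsCSS ends (Finset.univ : Finset E)) (i : ℕ) :
    shapVal (IsCSS (pathExt ends v i)) (Sum.inr (0 : Fin (i + 1)))
      = ∑ r ∈ Finset.range (Fintype.card E + 1),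
          (r + i).factorial
            * (Finset.univ.filter
                (fun S : Finset E => IsCSS ends S ∧ S.card = r)).card
            * (Fintype.card E - r).factorial :=
  stmt_10_general ends v i
end

section
/- Let (N, v) be a simple game with |N| = n, and let v_i (for i ≥ 1) denote the game on N ∪ {x_1, …, x_i} where a coalition wins iff it contains all of x_1,…,x_i and its restriction to N wins in v. Writing W_r for the number of winning coalitions of v of size r, the Shapley-Shubik value of x_1 in v_i equals Σ_{r=0}^{n} B_r · (r+i−1)! · (n−r)!, where B_r is the number of coalitions S ⊆ N of size r with v(S) = 1. [In particular, the vector of values (κ_{x_1}(v_i))_{i=1,…,n+1} determines all B_r via an invertible factorial Hankel system.] -/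
/-!
Every winning coalition of `v_i` contains `x_1`, so `x_1` is critical in exactly the winning
coalitions. These are the sets `T ⊔ {x_1, …, x_i}` with `T` winning in `v`, of size `|T| + i`
in a player set of size `n + i`; grouping them by `|T| = r` gives the formula.
-/

open Finset
open scoped Classical

/-- The game `v_i` on `N ⊕ Fin i`: a coalition wins iff it contains all the new players
`x_1, …, x_i` and its restriction to `N` wins in `v`. -/
def extByPath {N : Type*} [Fintype N] (v : Finset N → ℕ) (i : ℕ)
    (S : Finset (N ⊕ Fin i)) : Prop :=
  (∀ k : Fin i, Sum.inr k ∈ S) ∧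
    v (Finset.univ.filter (fun a : N => Sum.inl a ∈ S)) = 1

theorem shapVal_eq_sum_of_veto {E : Type*} [Fintype E] [DecidableEq E]
    {win : Finset E → Prop} {p : E} (hveto : ∀ S, win S → p ∈ S) :
    shapVal win p =
      ∑ S ∈ univ.filter win, (#S - 1).factorial * (Fintype.card E - #S).factorial := by
  refine sum_congr (filter_congr fun S _ => ?_) fun _ _ => rfl
  exact ⟨fun h => h.2.1, fun hS => ⟨hveto S hS, hS, fun hS' => notMem_erase p S (hveto _ hS')⟩⟩

theorem sum_filter_comp_card {α M : Type*} [Fintype α] [AddCommMonoid M]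
    (p : Finset α → Prop) [DecidablePred p] (f : ℕ → M) :
    ∑ T ∈ univ.filter p, f #T = ∑ r ∈ range (Fintype.card α + 1), #{T | #T = r ∧ p T} • f r := by
  rw [← sum_fiberwise_of_maps_to (g := card) (t := range (Fintype.card α + 1))
    fun T _ => mem_range.2 (Nat.lt_succ_of_le (card_le_univ T))]
  refine sum_congr rfl fun r _ => ?_
  rw [sum_congr rfl fun T hT => by rw [(mem_filter.1 hT).2], sum_const, filter_filter]
  simp_rw [and_comm]

section extByPath

variable {N : Type*} [Fintype N] (v : Finset N → ℕ) (i : ℕ)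

theorem extByPath_iff (S : Finset (N ⊕ Fin i)) :
    extByPath v i S ↔ S.toRight = univ ∧ v S.toLeft = 1 := by
  simp only [extByPath, eq_univ_iff_forall, mem_toRight]
  rw [show univ.filter (fun a : N => Sum.inl a ∈ S) = S.toLeft by ext; simp]

theorem sum_filter_extByPath {M : Type*} [AddCommMonoid M] (f : Finset (N ⊕ Fin i) → M) :
    ∑ S ∈ univ.filter (extByPath v i), f S = ∑ T ∈ univ.filter (v · = 1), f (T.disjSum univ) := by
  have hround : ∀ S ∈ univ.filter (extByPath v i), S.toLeft.disjSum univ = S := fun S hS => by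
    rw [← ((extByPath_iff v i S).1 (mem_filter.1 hS).2).1, toLeft_disjSum_toRight]
  refine sum_nbij' toLeft (·.disjSum univ) (fun S hS => ?_) (fun T hT => ?_) hround
    (fun T _ => toLeft_disjSum) (fun S hS => by rw [hround S hS])
  · simpa [extByPath_iff] using ((extByPath_iff v i S).1 (mem_filter.1 hS).2).2
  · simpa [extByPath_iff] using hT

end extByPath

theorem stmt_18_general {N : Type*} [Fintype N] [DecidableEq N] (v : Finset N → ℕ)
    (i : ℕ) (hi : 0 < i) :
    shapVal (extByPath v i) (Sum.inr (⟨0, hi⟩ : Fin i))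
      = ∑ r ∈ Finset.range (Fintype.card N + 1),
          (Finset.univ.filter
              (fun S : Finset N => S.card = r ∧ v S = 1)).card
            * (r + i - 1).factorial * (Fintype.card N - r).factorial := by
  rw [shapVal_eq_sum_of_veto fun S hS => hS.1 _, sum_filter_extByPath]
  simp only [card_disjSum, card_univ, Fintype.card_sum, Fintype.card_fin, Nat.add_sub_add_right]
  refine (sum_filter_comp_card (v · = 1)
    fun r => (r + i - 1).factorial * (Fintype.card N - r).factorial).trans ?_
  simp_rw [smul_eq_mul, mul_assoc]

/-- For a simple game `(N, v)` with `|N| = n` and the game `v_i` on `N ∪ {x_1,…,x_i}` where a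
coalition wins iff it contains all of `x_1,…,x_i` and its restriction to `N` wins in `v`,
the Shapley-Shubik value of `x_1` in `v_i` equals `Σ_{r=0}^{n} B_r · (r+i−1)! · (n−r)!`,
where `B_r` is the number of winning coalitions of `v` of size `r`. -/
theorem stmt_18 {N : Type*} [Fintype N] [DecidableEq N] (v : Finset N → ℕ)
    (hval : ∀ S, v S = 0 ∨ v S = 1)
    (hmono : ∀ S T : Finset N, S ⊆ T → v S ≤ v T)
    (h0 : v ∅ = 0) (h1 : v Finset.univ = 1)
    (i : ℕ) (hi : 0 < i) :
    shapVal (extByPath v i) (Sum.inr (⟨0, hi⟩ : Fin i))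
      = ∑ r ∈ Finset.range (Fintype.card N + 1),
          (Finset.univ.filter
              (fun S : Finset N => S.card = r ∧ v S = 1)).card
            * (r + i - 1).factorial * (Fintype.card N - r).factorial :=
  stmt_18_general v i hi
end
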